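/- arXiv:2211.01536 — 3 statements merged into one kernel-verified Lean document; each statement's English description precedes it below -/
import Mathlib

section
/- Let X be a commutative monoid and K a commutative ring. The category of covariant functors from the Leech category L_X to K-modules is equivalent to the category of X-graded left modules over the X-graded monoid algebra K̃X. -/
open CategoryTheory

/-- The Leech category of a commutative monoid `X`. -/
abbrev Leech (X : Type) [AddCommMonoid X] : Type := X

instance Leech.category (X : Type) [AddCommMonoid X] : Category (Leech X) where
  Hom x z := {y : X // x + y = z}
  id x := ⟨0, add_zero x⟩
  comp f g := ⟨f.1 + g.1, by rw [← add_assoc, f.2, g.2]⟩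
  id_comp f := Subtype.ext (zero_add f.1)
  comp_id f := Subtype.ext (add_zero f.1)
  assoc f g h := Subtype.ext (add_assoc f.1 g.1 h.1)

variable (K X : Type) [CommRing K] [AddCommMonoid X]

/-- An `X`-graded left module over the `X`-graded monoid algebra `K̃X`
(whose degree-`y` component is `K·1_y`): a family of `K`-modules `N x` together with
the action maps `(K̃X)_y ⊗ N x → N (x + y)`, i.e. `K`-bilinear maps `K ⊗ N x → N (x+y)`,
satisfying the unit and associativity laws. -/
structure TildeModule where
  N : X → Type
  [grp : ∀ x, AddCommGroup (N x)]
  [mod : ∀ x, Module K (N x)]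
  act : ∀ y x : X, K →ₗ[K] N x →ₗ[K] N (x + y)
  act_one : ∀ (x : X) (n : N x),
    act 0 x (1 : K) n = cast (congrArg N (add_zero x).symm) n
  act_mul : ∀ (y y' x : X) (c c' : K) (n : N x),
    act y' (x + y) c' (act y x c n)
      = cast (congrArg N (add_assoc x y y').symm) (act (y + y') x (c * c') n)

attribute [instance] TildeModule.grp TildeModule.mod

variable {K X}

/-- Morphisms of `X`-graded `K̃X`-modules: degree-preserving `K`-linear maps
commuting with the action. -/
@[ext]
structure TildeHom (M P : TildeModule K X) where
  toFun : ∀ x, M.N x →ₗ[K] P.N x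
  compat : ∀ (y x : X) (c : K) (n : M.N x),
    toFun (x + y) (M.act y x c n) = P.act y x c (toFun x n)

instance : Category (TildeModule K X) where
  Hom M P := TildeHom M P
  id M := ⟨fun x => LinearMap.id, fun y x c n => rfl⟩
  comp f g := ⟨fun x => (g.toFun x).comp (f.toFun x), by
    intro y x c n
    simp [LinearMap.comp_apply, f.compat, g.compat]⟩
  id_comp f := rfl
  comp_id f := rfl
  assoc f g h := rfl

/-! A functor `F` on `L_X` and a graded module `N` determine each other through
`N x = F x` and `1_y · n = F(y : x ⟶ x + y) n`; the action of `c · 1_y` is then forced to be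
`c • F(y) n`, and the unit and associativity laws of the action are exactly functoriality,
because a Leech morphism `x ⟶ z` is nothing but its label `y` with `x + y = z`.
Both round trips are the identity on underlying modules. -/

namespace Leech

abbrev shift (x y : Leech X) : x ⟶ x + y := ⟨y, rfl⟩

theorem map_apply_eq_cast (F : Leech X ⥤ ModuleCat.{0} K) {a b b' : Leech X}
    (f : a ⟶ b) (g : a ⟶ b') (hb : b = b') (h : f.1 = g.1) (n : F.obj a) :
    F.map g n = cast (congrArg (fun t => (F.obj t : Type)) hb) (F.map f n) := by
  obtain ⟨y, rfl⟩ := f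
  obtain ⟨y', rfl⟩ := g
  dsimp only at h
  subst h
  rfl

end Leech

namespace TildeModule

open Leech

theorem act_eq_smul_act_one (M : TildeModule K X) (y x : X) (c : K) (n : M.N x) :
    M.act y x c n = c • M.act y x 1 n := by
  rw [← LinearMap.smul_apply, ← map_smul, smul_eq_mul, mul_one]

def toLeechFunctor (M : TildeModule K X) : Leech X ⥤ ModuleCat.{0} K where
  obj x := ModuleCat.of K (M.N x)
  map {x _} f := ModuleCat.ofHom ((LinearEquiv.cast (M := M.N) f.2).toLinearMap ∘ₗ M.act f.1 x 1)
  map_id x := by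
    ext n
    exact (congrArg (cast _) (M.act_one x n)).trans (cast_cast _ _ n)
  map_comp {x _ _} f g := by
    obtain ⟨y, rfl⟩ := f
    obtain ⟨y', rfl⟩ := g
    ext n
    change cast _ (M.act (y + y') x 1 n) = M.act y' (x + y) 1 (M.act y x 1 n)
    rw [M.act_mul, one_mul]

def ofLeechFunctor (F : Leech X ⥤ ModuleCat.{0} K) : TildeModule K X where
  N x := F.obj x
  act y x := (LinearMap.lsmul K (F.obj (x + y))).compl₂ (F.map (shift x y)).hom
  act_one x n := by
    simpa using map_apply_eq_cast F (𝟙 x) (shift x 0) (add_zero x).symm rfl n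
  act_mul y y' x c c' n := by
    have hcomp := map_apply_eq_cast F (shift x (y + y')) (shift x y ≫ shift (x + y) y')
      (add_assoc x y y').symm rfl n
    simp only [LinearMap.compl₂_apply, LinearMap.lsmul_apply, map_smul, Functor.map_comp,
      ModuleCat.hom_comp, LinearMap.comp_apply] at hcomp ⊢
    rw [hcomp, smul_smul, mul_comm]
    exact ((LinearEquiv.cast (M := fun t => (F.obj t : Type))
      (add_assoc x y y').symm).map_smul _ _).symm

def ofLeechFunctorToLeechFunctorIso (M : TildeModule K X) :
    ofLeechFunctor M.toLeechFunctor ≅ M where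
  hom := ⟨fun _ => LinearMap.id, fun y x c n => (M.act_eq_smul_act_one y x c n).symm⟩
  inv := ⟨fun _ => LinearMap.id, fun y x c n => M.act_eq_smul_act_one y x c n⟩
  hom_inv_id := rfl
  inv_hom_id := rfl

def toLeechFunctorOfLeechFunctorIso (F : Leech X ⥤ ModuleCat.{0} K) :
    F ≅ (ofLeechFunctor F).toLeechFunctor :=
  NatIso.ofComponents (fun x => Iso.refl _) (by
    rintro x z ⟨y, rfl⟩
    ext n
    exact (one_smul K _).symm)

end TildeModule

open TildeModule

def tildeModuleToLeechFunctor : TildeModule K X ⥤ (Leech X ⥤ ModuleCat.{0} K) where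
  obj := toLeechFunctor
  map {M P} f :=
    { app x := ModuleCat.ofHom (f.toFun x)
      naturality := by
        rintro x z ⟨y, rfl⟩
        ext n
        exact f.compat y x 1 n }

def leechFunctorToTildeModule : (Leech X ⥤ ModuleCat.{0} K) ⥤ TildeModule K X where
  obj := ofLeechFunctor
  map {F G} η :=
    { toFun x := (η.app x).hom
      compat y x c n :=
        ((η.app (x + y)).hom.map_smul c _).trans
          (congrArg (c • ·) (NatTrans.naturality_apply η (Leech.shift x y) n)) }

def leechFunctorEquivTildeModule : (Leech X ⥤ ModuleCat.{0} K) ≌ TildeModule K X :=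
  .mk leechFunctorToTildeModule tildeModuleToLeechFunctor
    (NatIso.ofComponents toLeechFunctorOfLeechFunctorIso (fun _ => rfl))
    (NatIso.ofComponents ofLeechFunctorToLeechFunctorIso (fun _ => rfl))

/-- The category of covariant functors from the Leech category `L_X` to `K`-modules is
equivalent to the category of `X`-graded left modules over the `X`-graded monoid
algebra `K̃X`. -/
theorem leechFunctors_equiv_tildeModules (K X : Type) [CommRing K] [AddCommMonoid X] :
    Nonempty ((Leech X ⥤ ModuleCat.{0} K) ≌ TildeModule K X) :=
  ⟨leechFunctorEquivTildeModule⟩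
end

section
/- For 1 ≤ k ≤ n, the number of k-monotone permutations in the symmetric group Σ_n is the binomial coefficient C(n-1, k-1). (A permutation of {1,…,n}, viewed as the sequence σ(1),…,σ(n), is k-monotone if its first entry is k, the values 1,2,…,k occur in decreasing order, and the values k+1,…,n occur in increasing order.) -/
open Finset

/-- A permutation `σ` of `{1, …, n}` (encoded as `Equiv.Perm (Fin n)`, a position `i`
carrying the value `(σ i : ℕ) + 1 ∈ {1, …, n}`) is `k`-monotone if its first entry is `k`,
the values `1, …, k` occur in (strictly) decreasing order, and the values `k+1, …, n`
occur in (strictly) increasing order. -/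
def IsKMonotone (n k : ℕ) (hn : 0 < n) (σ : Equiv.Perm (Fin n)) : Prop :=
  ((σ ⟨0, hn⟩ : ℕ) + 1 = k) ∧
  (∀ i j : Fin n, i < j → (σ i : ℕ) + 1 ≤ k → (σ j : ℕ) + 1 ≤ k → (σ j : ℕ) < (σ i : ℕ)) ∧
  (∀ i j : Fin n, i < j → k < (σ i : ℕ) + 1 → k < (σ j : ℕ) + 1 → (σ i : ℕ) < (σ j : ℕ))

lemma tset_card (n k : ℕ) (hkn : k ≤ n) :
    (Finset.univ.filter fun v : Fin n => (v : ℕ) < k).card = k := by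
  rw [← Fintype.card_subtype]
  rw [Fintype.card_congr (⟨fun v => ⟨v.1.1, v.2⟩, fun j => ⟨⟨j.1, lt_of_lt_of_le j.2 hkn⟩, j.2⟩,
    fun v => rfl, fun j => rfl⟩ : {v : Fin n // (v : ℕ) < k} ≃ Fin k)]
  exact Fintype.card_fin k

lemma uset_card (n k : ℕ) (hkn : k ≤ n) :
    (Finset.univ.filter fun v : Fin n => k ≤ (v : ℕ)).card = n - k := by
  have h := Finset.card_filter_add_card_filter_not
    (s := (Finset.univ : Finset (Fin n))) (p := fun v : Fin n => (v : ℕ) < k)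
  simp only [not_lt] at h
  have h2 := tset_card n k hkn
  rw [Finset.card_univ, Fintype.card_fin] at h
  omega

lemma tset_orderEmb (n k : ℕ) (hkn : k ≤ n) (j : Fin k) :
    (((Finset.univ.filter fun v : Fin n => (v : ℕ) < k).orderEmbOfFin
      (tset_card n k hkn) j : Fin n) : ℕ) = j := by
  have h := Finset.orderEmbOfFin_unique (tset_card n k hkn)
      (f := fun j : Fin k => (⟨j.1, lt_of_lt_of_le j.2 hkn⟩ : Fin n))
      (fun x => by simp only [Finset.mem_filter, Finset.mem_univ, true_and]; exact x.2)
      (fun a b hab => by rw [Fin.mk_lt_mk]; exact hab)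
  rw [← congrFun h j]

lemma uset_orderEmb (n k : ℕ) (hkn : k ≤ n) (j : Fin (n - k)) :
    (((Finset.univ.filter fun v : Fin n => k ≤ (v : ℕ)).orderEmbOfFin
      (uset_card n k hkn) j : Fin n) : ℕ) = k + j := by
  have h := Finset.orderEmbOfFin_unique (uset_card n k hkn)
      (f := fun j : Fin (n - k) => (⟨k + j.1, by omega⟩ : Fin n))
      (fun x => by simp only [Finset.mem_filter, Finset.mem_univ, true_and]; omega)
      (fun a b hab => by rw [Fin.mk_lt_mk]; omega)
  rw [← congrFun h j]

lemma perm_filter_card (n k : ℕ) (hkn : k ≤ n) (σ : Equiv.Perm (Fin n)) :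
    (Finset.univ.filter fun i : Fin n => (σ i : ℕ) < k).card = k := by
  have h : (Finset.univ.filter fun i : Fin n => (σ i : ℕ) < k).card
      = (Finset.univ.filter fun v : Fin n => (v : ℕ) < k).card := by
    apply Finset.card_bij' (fun i _ => σ i) (fun v _ => σ.symm v) <;> simp
  rw [h, tset_card n k hkn]

lemma sdiff_card' (n k : ℕ) (s : Finset (Fin n)) (hs : s.card = k) :
    ((Finset.univ : Finset (Fin n)) \ s).card = n - k := by
  rw [Finset.card_sdiff_of_subset (Finset.subset_univ s), Finset.card_univ, Fintype.card_fin, hs]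

lemma kMonotone_ext (n k : ℕ) (hkn : k ≤ n) (hn : 0 < n)
    (σ τ : Equiv.Perm (Fin n)) (hσ : IsKMonotone n k hn σ) (hτ : IsKMonotone n k hn τ)
    (hfil : (Finset.univ.filter fun i : Fin n => (σ i : ℕ) < k)
          = (Finset.univ.filter fun i : Fin n => (τ i : ℕ) < k)) : σ = τ := by
  set s : Finset (Fin n) := Finset.univ.filter fun i : Fin n => (σ i : ℕ) < k with hsdef
  have hms : ∀ i : Fin n, i ∈ s ↔ (σ i : ℕ) < k := by
    intro i; simp [hsdef]
  have hmt : ∀ i : Fin n, i ∈ s ↔ (τ i : ℕ) < k := by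
    intro i; rw [hfil]; simp
  have hs : s.card = k := perm_filter_card n k hkn σ
  have hu : ((Finset.univ : Finset (Fin n)) \ s).card = n - k := by
    rw [Finset.card_sdiff_of_subset (Finset.subset_univ s), Finset.card_univ, Fintype.card_fin, hs]
  set e := s.orderEmbOfFin hs with hedef
  set f := ((Finset.univ : Finset (Fin n)) \ s).orderEmbOfFin hu with hfdef
  have key : ∀ (ρ : Equiv.Perm (Fin n)), IsKMonotone n k hn ρ →
      (∀ i : Fin n, i ∈ s ↔ (ρ i : ℕ) < k) →
      ((fun j : Fin k => ρ (e (Fin.rev j)))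
        = (Finset.univ.filter fun v : Fin n => (v : ℕ) < k).orderEmbOfFin (tset_card n k hkn))
      ∧ ((fun j : Fin (n - k) => ρ (f j))
        = (Finset.univ.filter fun v : Fin n => k ≤ (v : ℕ)).orderEmbOfFin (uset_card n k hkn)) := by
    intro ρ hρ hm
    constructor
    · apply Finset.orderEmbOfFin_unique
      · intro x
        simp only [Finset.mem_filter, Finset.mem_univ, true_and]
        exact (hm _).mp (Finset.orderEmbOfFin_mem s hs _)
      · intro a b hab
        have h1 : e (Fin.rev b) < e (Fin.rev a) :=
          (s.orderEmbOfFin hs).strictMono (Fin.rev_lt_rev.mpr hab)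
        have h2 : (ρ (e (Fin.rev a)) : ℕ) < k := (hm _).mp (Finset.orderEmbOfFin_mem s hs _)
        have h3 : (ρ (e (Fin.rev b)) : ℕ) < k := (hm _).mp (Finset.orderEmbOfFin_mem s hs _)
        have := hρ.2.1 (e (Fin.rev b)) (e (Fin.rev a)) h1 (by omega) (by omega)
        exact Fin.lt_def.mpr this
    · apply Finset.orderEmbOfFin_unique
      · intro x
        simp only [Finset.mem_filter, Finset.mem_univ, true_and]
        have hx : f x ∈ Finset.univ \ s := Finset.orderEmbOfFin_mem _ hu _
        rw [Finset.mem_sdiff] at hx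
        have := (hm (f x)).not.mp hx.2
        omega
      · intro a b hab
        have h1 : f a < f b := (Finset.orderEmbOfFin (_ \ s) hu).strictMono hab
        have hha : f a ∈ Finset.univ \ s := Finset.orderEmbOfFin_mem _ hu _
        have hhb : f b ∈ Finset.univ \ s := Finset.orderEmbOfFin_mem _ hu _
        rw [Finset.mem_sdiff] at hha hhb
        have h2 := (hm (f a)).not.mp hha.2
        have h3 := (hm (f b)).not.mp hhb.2
        have := hρ.2.2 (f a) (f b) h1 (by omega) (by omega)
        exact Fin.lt_def.mpr this
  have kσ := key σ hσ hms
  have kτ := key τ hτ hmt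
  ext i
  by_cases h : i ∈ s
  · have : (i : Fin n) ∈ Set.range e := by rw [hedef, Finset.range_orderEmbOfFin]; exact h
    obtain ⟨j, hj⟩ := this
    have h1 := congrFun (kσ.1.trans kτ.1.symm) (Fin.rev j)
    simp only [Fin.rev_rev] at h1
    rw [hj] at h1
    exact congrArg Fin.val h1
  · have : (i : Fin n) ∈ Set.range f := by
      rw [hfdef, Finset.range_orderEmbOfFin]
      simp [h]
    obtain ⟨j, hj⟩ := this
    have h1 := congrFun (kσ.2.trans kτ.2.symm) j
    rw [hj] at h1
    exact congrArg Fin.val h1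

def build (n k : ℕ) (hkn : k ≤ n) (s : Finset (Fin n)) (hs : s.card = k) (i : Fin n) : Fin n :=
  if h : i ∈ s then
    (Finset.univ.filter fun v : Fin n => (v : ℕ) < k).orderEmbOfFin (tset_card n k hkn)
      (Fin.rev ((s.orderIsoOfFin hs).symm ⟨i, h⟩))
  else
    (Finset.univ.filter fun v : Fin n => k ≤ (v : ℕ)).orderEmbOfFin (uset_card n k hkn)
      ((((Finset.univ : Finset (Fin n)) \ s).orderIsoOfFin (sdiff_card' n k s hs)).symm
        ⟨i, by simp [h]⟩)

lemma build_mem (n k : ℕ) (hkn : k ≤ n) (s : Finset (Fin n)) (hs : s.card = k) (i : Fin n)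
    (h : i ∈ s) :
    (build n k hkn s hs i : ℕ) = k - 1 - ((s.orderIsoOfFin hs).symm ⟨i, h⟩ : ℕ) := by
  rw [build, dif_pos h, tset_orderEmb n k hkn, Fin.val_rev]
  omega

lemma build_not_mem (n k : ℕ) (hkn : k ≤ n) (s : Finset (Fin n)) (hs : s.card = k) (i : Fin n)
    (h : i ∉ s) :
    (build n k hkn s hs i : ℕ) = k +
      (((((Finset.univ : Finset (Fin n)) \ s).orderIsoOfFin (sdiff_card' n k s hs)).symm
        ⟨i, by simp [h]⟩ : Fin (n - k)) : ℕ) := by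
  rw [build, dif_neg h, uset_orderEmb n k hkn]

lemma build_lt_iff (n k : ℕ) (hk : 1 ≤ k) (hkn : k ≤ n) (s : Finset (Fin n)) (hs : s.card = k)
    (i : Fin n) : (build n k hkn s hs i : ℕ) < k ↔ i ∈ s := by
  by_cases h : i ∈ s
  · rw [build_mem n k hkn s hs i h]
    simp only [h, iff_true]
    omega
  · rw [build_not_mem n k hkn s hs i h]
    simp only [h, iff_false, not_lt]
    omega

lemma build_injective (n k : ℕ) (hk : 1 ≤ k) (hkn : k ≤ n) (s : Finset (Fin n))
    (hs : s.card = k) : Function.Injective (build n k hkn s hs) := by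
  intro i j hij
  by_cases hi : i ∈ s <;> by_cases hj : j ∈ s
  · have h1 := build_mem n k hkn s hs i hi
    have h2 := build_mem n k hkn s hs j hj
    rw [hij] at h1
    have hri := (((s.orderIsoOfFin hs).symm ⟨i, hi⟩ : Fin k)).isLt
    have hrj := (((s.orderIsoOfFin hs).symm ⟨j, hj⟩ : Fin k)).isLt
    have : ((s.orderIsoOfFin hs).symm ⟨i, hi⟩ : Fin k) = (s.orderIsoOfFin hs).symm ⟨j, hj⟩ := by
      apply Fin.ext; omega
    have := (s.orderIsoOfFin hs).symm.injective this
    exact Subtype.mk_eq_mk.mp this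
  · have h1 := (build_lt_iff n k hk hkn s hs i).mpr hi
    have h2 := (build_lt_iff n k hk hkn s hs j).not.mpr hj
    rw [hij] at h1; omega
  · have h1 := (build_lt_iff n k hk hkn s hs i).not.mpr hi
    have h2 := (build_lt_iff n k hk hkn s hs j).mpr hj
    rw [hij] at h1; omega
  · have h1 := build_not_mem n k hkn s hs i hi
    have h2 := build_not_mem n k hkn s hs j hj
    rw [hij] at h1
    have : ((((Finset.univ : Finset (Fin n)) \ s).orderIsoOfFin (sdiff_card' n k s hs)).symm
        ⟨i, by simp [hi]⟩) = ((((Finset.univ : Finset (Fin n)) \ s).orderIsoOfFin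
          (sdiff_card' n k s hs)).symm ⟨j, by simp [hj]⟩) := by
      apply Fin.ext; omega
    have := (((Finset.univ : Finset (Fin n)) \ s).orderIsoOfFin
      (sdiff_card' n k s hs)).symm.injective this
    exact Subtype.mk_eq_mk.mp this

noncomputable def buildPerm (n k : ℕ) (hk : 1 ≤ k) (hkn : k ≤ n) (s : Finset (Fin n)) (hs : s.card = k) :
    Equiv.Perm (Fin n) :=
  Equiv.ofBijective (build n k hkn s hs)
    (Finite.injective_iff_bijective.mp (build_injective n k hk hkn s hs))

lemma buildPerm_apply (n k : ℕ) (hk : 1 ≤ k) (hkn : k ≤ n) (s : Finset (Fin n))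
    (hs : s.card = k) (i : Fin n) : buildPerm n k hk hkn s hs i = build n k hkn s hs i := rfl

lemma buildPerm_isKMonotone (n k : ℕ) (hk : 1 ≤ k) (hkn : k ≤ n) (hn : 0 < n)
    (s : Finset (Fin n)) (hs : s.card = k) (h0 : (⟨0, hn⟩ : Fin n) ∈ s) :
    IsKMonotone n k hn (buildPerm n k hk hkn s hs) := by
  refine ⟨?_, ?_, ?_⟩
  · rw [buildPerm_apply, build_mem n k hkn s hs _ h0]
    have hrank : ((s.orderIsoOfFin hs).symm ⟨⟨0, hn⟩, h0⟩ : Fin k) = ⟨0, hk⟩ := by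
      rw [OrderIso.symm_apply_eq]
      apply Subtype.ext
      rw [Finset.coe_orderIsoOfFin_apply, Finset.orderEmbOfFin_zero hs hk]
      apply le_antisymm
      · apply Finset.le_min'
        intro y _
        exact Fin.mk_le_of_le_val (Nat.zero_le _)
      · exact Finset.min'_le s _ h0
    rw [hrank]
    simp only [Fin.val_mk]
    omega
  · intro i j hij hi hj
    have hi' : i ∈ s := (build_lt_iff n k hk hkn s hs i).mp (by rw [← buildPerm_apply n k hk hkn]; omega)
    have hj' : j ∈ s := (build_lt_iff n k hk hkn s hs j).mp (by rw [← buildPerm_apply n k hk hkn]; omega)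
    rw [buildPerm_apply, buildPerm_apply, build_mem n k hkn s hs i hi',
      build_mem n k hkn s hs j hj']
    have hmono : ((s.orderIsoOfFin hs).symm ⟨i, hi'⟩ : Fin k)
        < (s.orderIsoOfFin hs).symm ⟨j, hj'⟩ :=
      (s.orderIsoOfFin hs).symm.strictMono (Subtype.mk_lt_mk.mpr hij)
    have h1 := (((s.orderIsoOfFin hs).symm ⟨i, hi'⟩ : Fin k)).isLt
    have h2 := (((s.orderIsoOfFin hs).symm ⟨j, hj'⟩ : Fin k)).isLt
    have := Fin.lt_def.mp hmono
    omega
  · intro i j hij hi hj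
    have hi' : i ∉ s := by
      rw [← build_lt_iff n k hk hkn s hs i]
      rw [buildPerm_apply] at hi; omega
    have hj' : j ∉ s := by
      rw [← build_lt_iff n k hk hkn s hs j]
      rw [buildPerm_apply] at hj; omega
    rw [buildPerm_apply, buildPerm_apply, build_not_mem n k hkn s hs i hi',
      build_not_mem n k hkn s hs j hj']
    have hmono : ((((Finset.univ : Finset (Fin n)) \ s).orderIsoOfFin
          (sdiff_card' n k s hs)).symm ⟨i, by simp [hi']⟩ : Fin (n - k))
        < (((Finset.univ : Finset (Fin n)) \ s).orderIsoOfFin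
          (sdiff_card' n k s hs)).symm ⟨j, by simp [hj']⟩ :=
      (((Finset.univ : Finset (Fin n)) \ s).orderIsoOfFin
        (sdiff_card' n k s hs)).symm.strictMono (Subtype.mk_lt_mk.mpr hij)
    have := Fin.lt_def.mp hmono
    omega

/-- For `1 ≤ k ≤ n`, the number of `k`-monotone permutations in the symmetric group `Σ_n`
is the binomial coefficient `C(n-1, k-1)`. -/
theorem card_kMonotone (n k : ℕ) (hk : 1 ≤ k) (hkn : k ≤ n) :
    Nat.card {σ : Equiv.Perm (Fin n) // IsKMonotone n k (by omega) σ}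
      = Nat.choose (n - 1) (k - 1) := by
  have hn : 0 < n := by omega
  have h1 : Nat.card {σ : Equiv.Perm (Fin n) // IsKMonotone n k (by omega) σ}
      = Nat.card {s : Finset (Fin n) // (⟨0, hn⟩ : Fin n) ∈ s ∧ s.card = k} := by
    apply Nat.card_eq_of_bijective (fun σ =>
      ⟨Finset.univ.filter fun i : Fin n => (σ.1 i : ℕ) < k,
        Finset.mem_filter.mpr ⟨Finset.mem_univ _, by have := σ.2.1; omega⟩,
        perm_filter_card n k hkn σ.1⟩)
    constructor
    · intro σ τ h
      exact Subtype.ext (kMonotone_ext n k hkn hn σ.1 τ.1 σ.2 τ.2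
        (congrArg Subtype.val h))
    · rintro ⟨s, h0, hs⟩
      refine ⟨⟨buildPerm n k hk hkn s hs, buildPerm_isKMonotone n k hk hkn hn s hs h0⟩, ?_⟩
      apply Subtype.ext
      simp only
      ext i
      simp only [Finset.mem_filter, Finset.mem_univ, true_and]
      rw [buildPerm_apply]
      exact build_lt_iff n k hk hkn s hs i
  rw [h1]
  have e : {s : Finset (Fin n) // (⟨0, hn⟩ : Fin n) ∈ s ∧ s.card = k}
      ≃ {t // t ∈ Finset.powersetCard (k - 1)
          ((Finset.univ : Finset (Fin n)).erase ⟨0, hn⟩)} :=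
    { toFun := fun s => ⟨s.1.erase ⟨0, hn⟩, by
        rw [Finset.mem_powersetCard]
        constructor
        · intro x hx
          rw [Finset.mem_erase] at hx ⊢
          exact ⟨hx.1, Finset.mem_univ x⟩
        · rw [Finset.card_erase_of_mem s.2.1, s.2.2]⟩
      invFun := fun t => ⟨insert ⟨0, hn⟩ t.1, by
        have ht := Finset.mem_powersetCard.mp t.2
        have h0 : (⟨0, hn⟩ : Fin n) ∉ t.1 := fun hc => (Finset.mem_erase.mp (ht.1 hc)).1 rfl
        refine ⟨Finset.mem_insert_self _ _, ?_⟩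
        rw [Finset.card_insert_of_notMem h0, ht.2]
        omega⟩
      left_inv := fun s => Subtype.ext (Finset.insert_erase s.2.1)
      right_inv := fun t => Subtype.ext (Finset.erase_insert
        (fun hc => (Finset.mem_erase.mp ((Finset.mem_powersetCard.mp t.2).1 hc)).1 rfl)) }
  rw [Nat.card_congr e, Nat.card_eq_finsetCard, Finset.card_powersetCard,
    Finset.card_erase_of_mem (Finset.mem_univ _), Finset.card_univ, Fintype.card_fin]
end

section
/- A K-linear 4-cochain s : A^{⊗4} → M satisfies all the monotone symmetry conditions (2-monotone: s(a₁,a₂,a₃,a₄) = s(a₂,a₁,a₃,a₄) − s(a₂,a₃,a₁,a₄) + s(a₂,a₃,a₄,a₁); 3-monotone: s(a₁,a₂,a₃,a₄) = −s(a₃,a₂,a₁,a₄) + s(a₃,a₂,a₄,a₁) − s(a₃,a₄,a₂,a₁); 4-monotone: s(a₁,a₂,a₃,a₄) = −s(a₄,a₃,a₂,a₁)) if and only if it satisfies the 4-monotone condition together with either one of the 2-monotone or 3-monotone conditions. -/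
variable {K A M : Type} [CommRing K] [AddCommGroup A] [Module K A]
  [AddCommGroup M] [Module K M]

/-- The 2-monotone symmetry condition on a 4-cochain. -/
def TwoMonotone (s : MultilinearMap K (fun _ : Fin 4 => A) M) : Prop :=
  ∀ a₁ a₂ a₃ a₄ : A,
    s ![a₁, a₂, a₃, a₄] = s ![a₂, a₁, a₃, a₄] - s ![a₂, a₃, a₁, a₄] + s ![a₂, a₃, a₄, a₁]

/-- The 3-monotone symmetry condition on a 4-cochain. -/
def ThreeMonotone (s : MultilinearMap K (fun _ : Fin 4 => A) M) : Prop :=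
  ∀ a₁ a₂ a₃ a₄ : A,
    s ![a₁, a₂, a₃, a₄] = -s ![a₃, a₂, a₁, a₄] + s ![a₃, a₂, a₄, a₁] - s ![a₃, a₄, a₂, a₁]

/-- The 4-monotone symmetry condition on a 4-cochain. -/
def FourMonotone (s : MultilinearMap K (fun _ : Fin 4 => A) M) : Prop :=
  ∀ a₁ a₂ a₃ a₄ : A, s ![a₁, a₂, a₃, a₄] = -s ![a₄, a₃, a₂, a₁]

/-- A `K`-multilinear 4-cochain satisfies all of the monotone symmetry conditions
if and only if it satisfies the 4-monotone condition together with either one of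
the 2-monotone or 3-monotone conditions. -/
theorem monotone_conditions_redundant (s : MultilinearMap K (fun _ : Fin 4 => A) M) :
    ((TwoMonotone s ∧ ThreeMonotone s ∧ FourMonotone s) ↔ (FourMonotone s ∧ TwoMonotone s)) ∧
    ((TwoMonotone s ∧ ThreeMonotone s ∧ FourMonotone s) ↔ (FourMonotone s ∧ ThreeMonotone s)) := by
  have two_of : FourMonotone s → ThreeMonotone s → TwoMonotone s := by
    intro h4 h3 a₁ a₂ a₃ a₄
    linear_combination (norm := abel) (h3 a₄ a₁ a₂ a₃) + (h4 a₁ a₂ a₃ a₄)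
      - (h3 a₂ a₁ a₄ a₃) - (h3 a₂ a₃ a₄ a₁)
  have three_of : FourMonotone s → TwoMonotone s → ThreeMonotone s := by
    intro h4 h2 a₁ a₂ a₃ a₄
    linear_combination (norm := abel) (h2 a₁ a₃ a₂ a₄) + (h2 a₁ a₄ a₂ a₃)
      + (h2 a₃ a₁ a₂ a₄) + (h2 a₃ a₄ a₂ a₁) + (h2 a₄ a₁ a₂ a₃) + (h4 a₁ a₂ a₃ a₄)
  constructor
  · constructor
    · rintro ⟨h2, _, h4⟩; exact ⟨h4, h2⟩
    · rintro ⟨h4, h2⟩; exact ⟨h2, three_of h4 h2, h4⟩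
  · constructor
    · rintro ⟨_, h3, h4⟩; exact ⟨h4, h3⟩
    · rintro ⟨h4, h3⟩; exact ⟨two_of h4 h3, h3, h4⟩
end
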